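/- arXiv:2601.10296 — 10 statements merged into one kernel-verified Lean document; each statement's English description precedes it below -/
import Mathlib

section
/- Let p be a prime and let a, b be integers not divisible by p. Set r = ord_p(a), s = ord_p(b), ℓ = lcm(r, s), u = r/gcd(r, s), and let v be the unique integer with 1 ≤ v ≤ s and a^u ≡ b^v (mod p). Then: (i) gcd(v, s) = s/gcd(r, s) = ℓ/r; (ii) p ≡ 1 (mod ℓ); and (iii) there exist an integer j with gcd(j, s) = 1 and j·(v/gcd(v,s)) ≡ 1 (mod gcd(r, s)), and an integer g whose multiplicative order modulo p equals ℓ, such that a ≡ g^{ℓ/r} (mod p) and b ≡ g^{j·ℓ/s} (mod p). -/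
/-- For a prime `p`, integers `a, b` not divisible by `p`, with `r = ord_p a`,
`s = ord_p b`, `ℓ = lcm(r,s)`, `u = r/gcd(r,s)`, and `v` the unique integer with
`1 ≤ v ≤ s` and `a^u ≡ b^v (mod p)`:
(i) `gcd(v,s) = s/gcd(r,s) = ℓ/r`; (ii) `p ≡ 1 (mod ℓ)`; (iii) there exist `j`
with `gcd(j,s) = 1` and `j·(v/gcd(v,s)) ≡ 1 (mod gcd(r,s))`, and `g` of
multiplicative order `ℓ` mod `p`, with `a ≡ g^(ℓ/r)` and `b ≡ g^(j·ℓ/s) (mod p)`. -/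
theorem primes_yielding_reduced_triple (p : ℕ) (hp : p.Prime) (a b : ℤ)
    (ha : ¬ (p : ℤ) ∣ a) (hb : ¬ (p : ℤ) ∣ b)
    (r s ℓ u v : ℕ)
    (hr : r = orderOf (a : ZMod p)) (hs : s = orderOf (b : ZMod p))
    (hℓ : ℓ = Nat.lcm r s) (hu : u = r / Nat.gcd r s)
    (hv1 : 1 ≤ v) (hv2 : v ≤ s) (hv : (a : ZMod p) ^ u = (b : ZMod p) ^ v) :
    (Nat.gcd v s = s / Nat.gcd r s ∧ s / Nat.gcd r s = ℓ / r) ∧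
    (p ≡ 1 [MOD ℓ]) ∧
    (∃ j : ℕ, Nat.gcd j s = 1 ∧ j * (v / Nat.gcd v s) ≡ 1 [MOD Nat.gcd r s] ∧
      ∃ g : ZMod p, orderOf g = ℓ ∧
        (a : ZMod p) = g ^ (ℓ / r) ∧ (b : ZMod p) = g ^ (j * (ℓ / s))) := by
  haveI : Fact p.Prime := ⟨hp⟩
  have ha0 : (a : ZMod p) ≠ 0 := by
    rw [Ne, ZMod.intCast_zmod_eq_zero_iff_dvd]; exact ha
  have hb0 : (b : ZMod p) ≠ 0 := by
    rw [Ne, ZMod.intCast_zmod_eq_zero_iff_dvd]; exact hb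
  set A : (ZMod p)ˣ := Units.mk0 _ ha0 with hA
  set B : (ZMod p)ˣ := Units.mk0 _ hb0 with hB
  have hAa : (A : ZMod p) = (a : ZMod p) := rfl
  have hBb : (B : ZMod p) = (b : ZMod p) := rfl
  have hrA : r = orderOf A := by rw [hr, ← orderOf_units, hAa]
  have hsB : s = orderOf B := by rw [hs, ← orderOf_units, hBb]
  have rpos : 0 < r := hrA ▸ orderOf_pos A
  have spos : 0 < s := hsB ▸ orderOf_pos B
  -- gcd decomposition
  set d : ℕ := Nat.gcd r s with hd
  have dpos : 0 < d := Nat.gcd_pos_of_pos_left s rpos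
  set r' : ℕ := r / d with hr'
  set s' : ℕ := s / d with hs'
  have hrd : d * r' = r := Nat.mul_div_cancel' (Nat.gcd_dvd_left r s)
  have hsd : d * s' = s := Nat.mul_div_cancel' (Nat.gcd_dvd_right r s)
  have r'pos : 0 < r' := Nat.pos_of_ne_zero (fun h => by rw [h, mul_zero] at hrd; omega)
  have s'pos : 0 < s' := Nat.pos_of_ne_zero (fun h => by rw [h, mul_zero] at hsd; omega)
  have hcop : Nat.Coprime r' s' := Nat.coprime_div_gcd_div_gcd dpos
  have hℓ2 : ℓ = d * (r' * s') := by
    rw [hℓ, ← hrd, ← hsd, Nat.lcm_mul_left, hcop.lcm_eq_mul]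
  have ℓpos : 0 < ℓ := by rw [hℓ2]; positivity
  have hℓr : ℓ = r * s' := by rw [hℓ2, ← hrd]; ring
  have hℓs : ℓ = s * r' := by rw [hℓ2, ← hsd]; ring
  have hℓrdiv : ℓ / r = s' := by rw [hℓr, Nat.mul_div_cancel_left _ rpos]
  have hℓsdiv : ℓ / s = r' := by rw [hℓs, Nat.mul_div_cancel_left _ spos]
  have hu' : u = r' := hu
  -- (i)
  have hABuv : A ^ u = B ^ v := by
    apply Units.ext
    rw [Units.val_pow_eq_pow_val, Units.val_pow_eq_pow_val, hAa, hBb]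
    exact hv
  have hordu : orderOf (A ^ u) = d := by
    rw [orderOf_pow, ← hrA, hu', Nat.gcd_eq_right ⟨d, by rw [← hrd]; ring⟩, ← hrd,
      Nat.mul_div_cancel _ r'pos]
  have hordv : orderOf (B ^ v) = s / Nat.gcd s v := by rw [orderOf_pow, ← hsB]
  have hgsv : Nat.gcd s v = s' := by
    have h1 : d = s / Nat.gcd s v := by rw [← hordu, hABuv, hordv]
    have h2 : Nat.gcd s v = s / d := by
      rw [h1, Nat.div_div_self (Nat.gcd_dvd_left s v) spos.ne']
    rw [h2]
  have hgvs : Nat.gcd v s = s' := by rw [Nat.gcd_comm, hgsv]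
  set v' : ℕ := v / s' with hv'
  have hvv' : s' * v' = v := by
    rw [hv']; exact Nat.mul_div_cancel' (hgvs ▸ Nat.gcd_dvd_left v s)
  -- the cyclic group
  set n : ℕ := Fintype.card (ZMod p)ˣ with hn
  have hnp : n = p - 1 := by rw [hn, ZMod.card_units_eq_totient, Nat.totient_prime hp]
  have npos : 0 < n := Fintype.card_pos
  obtain ⟨h, hh⟩ := IsCyclic.exists_generator (α := (ZMod p)ˣ)
  have hhn : orderOf h = n := by
    rw [orderOf_eq_card_of_forall_mem_zpowers hh, Nat.card_eq_fintype_card]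
  have hrn : r ∣ n := by rw [hrA, hn]; exact orderOf_dvd_card
  have hsn : s ∣ n := by rw [hsB, hn]; exact orderOf_dvd_card
  have hℓn : ℓ ∣ n := by rw [hℓ]; exact Nat.lcm_dvd hrn hsn
  set m : ℕ := n / ℓ with hm
  have hmℓ : ℓ * m = n := Nat.mul_div_cancel' hℓn
  have mpos : 0 < m := Nat.pos_of_ne_zero (fun h => by rw [h, mul_zero] at hmℓ; omega)
  -- (ii)
  have part2 : p ≡ 1 [MOD ℓ] := by
    have : ℓ ∣ p - 1 := hnp ▸ hℓn
    exact ((Nat.modEq_iff_dvd' hp.one_lt.le).mpr this).symm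
  -- discrete logs
  obtain ⟨α, hα⟩ : ∃ α : ℕ, h ^ α = A := mem_powers_iff_mem_zpowers.mpr (hh A)
  obtain ⟨β, hβ⟩ : ∃ β : ℕ, h ^ β = B := mem_powers_iff_mem_zpowers.mpr (hh B)
  have hrα : r = n / Nat.gcd n α := by rw [hrA, ← hα, orderOf_pow, hhn]
  have hsβ : s = n / Nat.gcd n β := by rw [hsB, ← hβ, orderOf_pow, hhn]
  have hgα : Nat.gcd n α = n / r := by
    rw [hrα, Nat.div_div_self (Nat.gcd_dvd_left n α) npos.ne']
  have hgβ : Nat.gcd n β = n / s := by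
    rw [hsβ, Nat.div_div_self (Nat.gcd_dvd_left n β) npos.ne']
  have hnr : n / r = s' * m := by
    have : r * (s' * m) = n := by rw [← hmℓ, hℓr]; ring
    rw [← this, Nat.mul_div_cancel_left _ rpos]
  have hns : n / s = r' * m := by
    have : s * (r' * m) = n := by rw [← hmℓ, hℓs]; ring
    rw [← this, Nat.mul_div_cancel_left _ spos]
  set α₁ : ℕ := α / Nat.gcd n α with hα₁def
  set β₁ : ℕ := β / Nat.gcd n β with hβ₁def
  have hα₁ : α = (s' * m) * α₁ := by
    have h0 : Nat.gcd n α * α₁ = α := Nat.mul_div_cancel' (Nat.gcd_dvd_right n α)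
    rw [← h0, hgα, hnr]
  have hβ₁ : β = (r' * m) * β₁ := by
    have h0 : Nat.gcd n β * β₁ = β := Nat.mul_div_cancel' (Nat.gcd_dvd_right n β)
    rw [← h0, hgβ, hns]
  have hcα : Nat.Coprime α₁ r := by
    have := (Nat.coprime_div_gcd_div_gcd (m := n) (n := α)
      (Nat.gcd_pos_of_pos_left α npos)).symm
    rwa [← hrα] at this
  have hcβ : Nat.Coprime β₁ s := by
    have := (Nat.coprime_div_gcd_div_gcd (m := n) (n := β)
      (Nat.gcd_pos_of_pos_left β npos)).symm
    rwa [← hsβ] at this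
  -- the relation
  have hmod : α * u ≡ β * v [MOD n] := by
    have : h ^ (α * u) = h ^ (β * v) := by
      rw [pow_mul, pow_mul, hα, hβ, hABuv]
    rw [← hhn]; exact pow_eq_pow_iff_modEq.mp this
  have hkey : α₁ ≡ v' * β₁ [MOD d] := by
    have e1 : α * u = (m * r' * s') * α₁ := by rw [hα₁, hu']; ring
    have e2 : β * v = (m * r' * s') * (v' * β₁) := by rw [hβ₁, ← hvv']; ring
    rw [e1, e2] at hmod
    have hc : (m * r' * s') ∣ n := ⟨d, by rw [← hmℓ, hℓ2]; ring⟩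
    have := hmod.cancel_left_div_gcd npos
    have hgc : Nat.gcd n (m * r' * s') = m * r' * s' := Nat.gcd_eq_right hc
    have hnd : n / (m * r' * s') = d := by
      have hx : (m * r' * s') * d = n := by rw [← hmℓ, hℓ2]; ring
      rw [← hx, Nat.mul_div_cancel_left _ (by positivity)]
    rwa [hgc, hnd] at this
  -- construct γ
  have hrℓ : r ∣ ℓ := hℓ ▸ Nat.dvd_lcm_left r s
  have hsℓ : s ∣ ℓ := hℓ ▸ Nat.dvd_lcm_right r s
  have hdr : d ∣ r := Nat.gcd_dvd_left r s
  have hds : d ∣ s := Nat.gcd_dvd_right r s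
  haveI : NeZero ℓ := ⟨ℓpos.ne'⟩
  haveI : NeZero s := ⟨spos.ne'⟩
  haveI : NeZero r := ⟨rpos.ne'⟩
  obtain ⟨U, hU⟩ := ZMod.unitsMap_surjective hrℓ (ZMod.unitOfCoprime α₁ hcα)
  set γ : ℕ := (U : ZMod ℓ).val with hγdef
  have hγℓ : Nat.Coprime γ ℓ := ZMod.val_coe_unit_coprime U
  have hγα : γ ≡ α₁ [MOD r] := by
    have h1 := congrArg Units.val hU
    simp only [ZMod.unitsMap_def, Units.coe_map, ZMod.coe_unitOfCoprime,
      MonoidHom.coe_coe] at h1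
    rw [← ZMod.natCast_eq_natCast_iff, hγdef, ZMod.natCast_val, ← h1, ZMod.castHom_apply]
  have hγs : Nat.Coprime γ s := Nat.Coprime.coprime_dvd_right hsℓ hγℓ
  have hγd : Nat.Coprime γ d := Nat.Coprime.coprime_dvd_right (hdr.trans hrℓ) hγℓ
  -- construct j
  set J : (ZMod s)ˣ := ZMod.unitOfCoprime β₁ hcβ * (ZMod.unitOfCoprime γ hγs)⁻¹ with hJ
  set j : ℕ := (J : ZMod s).val with hjdef
  have hjs : Nat.gcd j s = 1 := ZMod.val_coe_unit_coprime J
  have hjγ : j * γ ≡ β₁ [MOD s] := by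
    have h1 : J * ZMod.unitOfCoprime γ hγs = ZMod.unitOfCoprime β₁ hcβ := by
      rw [hJ, inv_mul_cancel_right]
    have h2 : ((j : ℕ) : ZMod s) * (γ : ZMod s) = (β₁ : ZMod s) := by
      have h3 := congrArg (Units.val) h1
      rw [Units.val_mul, ZMod.coe_unitOfCoprime, ZMod.coe_unitOfCoprime] at h3
      rw [hjdef, ZMod.natCast_val, ZMod.cast_id]
      exact h3
    rw [← ZMod.natCast_eq_natCast_iff]
    push_cast
    exact h2
  have hγαd : γ ≡ α₁ [MOD d] := hγα.of_dvd hdr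
  have hjγd : j * γ ≡ β₁ [MOD d] := hjγ.of_dvd hds
  have hjv : j * v' ≡ 1 [MOD d] := by
    have chain : (j * v') * γ ≡ 1 * γ [MOD d] := by
      calc (j * v') * γ = v' * (j * γ) := by ring
        _ ≡ v' * β₁ [MOD d] := hjγd.mul_left v'
        _ ≡ α₁ [MOD d] := hkey.symm
        _ ≡ γ [MOD d] := hγαd.symm
        _ = 1 * γ := by ring
    exact Nat.ModEq.cancel_right_of_coprime (by rw [Nat.gcd_comm]; exact hγd) chain
  -- construct g
  refine ⟨⟨hgvs, hℓrdiv.symm⟩, part2, j, hjs, by rw [hgvs]; exact hjv,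
    ((h ^ (m * γ) : (ZMod p)ˣ) : ZMod p), ?_, ?_, ?_⟩
  · -- order
    rw [orderOf_units, orderOf_pow, hhn]
    have : Nat.gcd n (m * γ) = m := by
      rw [← hmℓ, mul_comm ℓ m, Nat.gcd_mul_left, Nat.Coprime.gcd_eq_one (by
        rw [Nat.coprime_comm]; exact hγℓ), mul_one]
    rw [this, ← hmℓ, mul_comm ℓ m, Nat.mul_div_cancel_left _ mpos]
  · -- a = g ^ (ℓ / r)
    rw [hℓrdiv, ← hAa, ← hα, ← Units.val_pow_eq_pow_val, ← pow_mul]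
    congr 1
    apply pow_eq_pow_iff_modEq.mpr
    rw [hhn]
    have := hγα.symm.mul_left' (s' * m)
    have e1 : s' * m * γ = m * γ * s' := by ring
    have e2 : s' * m * r = n := by rw [← hmℓ, hℓr]; ring
    rw [e2] at this
    calc α = (s' * m) * α₁ := hα₁
      _ ≡ (s' * m) * γ [MOD n] := this
      _ = m * γ * s' := by ring
  · -- b = g ^ (j * (ℓ / s))
    rw [hℓsdiv, ← hBb, ← hβ, ← Units.val_pow_eq_pow_val, ← pow_mul]
    congr 1
    apply pow_eq_pow_iff_modEq.mpr
    rw [hhn]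
    have := (hjγ.mul_left' (r' * m)).symm
    have e2 : r' * m * s = n := by rw [← hmℓ, hℓs]; ring
    rw [e2] at this
    calc β = (r' * m) * β₁ := hβ₁
      _ ≡ (r' * m) * (j * γ) [MOD n] := this
      _ = m * γ * (j * r') := by ring
end

section
/- Let a, b be integers and let p, q, r be distinct odd primes such that p divides both a+1 and b−1, q divides both a−1 and b+1, and r divides both a+1 and b+1. Then gcd(a^m − b^n, p·q·r) > 1 for all integers m, n ≥ 1. -/
/-!
Reducing modulo `p`, `q` and `r`, the pair `(a, b)` becomes `(-1, 1)`, `(1, -1)` and `(-1, -1)`.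
Whatever the parities of `m` and `n`, one of these primes therefore sees `a ^ m ≡ b ^ n`:
`p` when `m` is even, `q` when `m` is odd and `n` even, `r` when both are odd.
-/

theorem Int.one_lt_gcd_of_dvd_of_dvd {x y : ℤ} {s : ℕ} (hs : 1 < s) (hy : y ≠ 0)
    (hsx : (s : ℤ) ∣ x) (hsy : (s : ℤ) ∣ y) : 1 < Int.gcd x y :=
  hs.trans_le <| Nat.le_of_dvd (Int.gcd_pos_of_ne_zero_right x hy)
    (Int.ofNat_dvd.mp (Int.dvd_coe_gcd hsx hsy))

theorem dvd_pow_sub_pow_of_dvd_sub {R : Type*} [CommRing R] {s a b u v : R} {m n : ℕ}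
    (ha : s ∣ a - u) (hb : s ∣ b - v) (huv : u ^ m = v ^ n) : s ∣ a ^ m - b ^ n := by
  have key : a ^ m - b ^ n = (a ^ m - u ^ m) - (b ^ n - v ^ n) := by rw [huv]; ring
  rw [key]
  exact dvd_sub (ha.trans (sub_dvd_pow_sub_pow a u m)) (hb.trans (sub_dvd_pow_sub_pow b v n))

theorem covering_example_mod_two_general
    (a b : ℤ) (p q r : ℕ)
    (hp : p.Prime) (hq : q.Prime) (hr : r.Prime)
    (hp1 : (p : ℤ) ∣ a + 1) (hp2 : (p : ℤ) ∣ b - 1)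
    (hq1 : (q : ℤ) ∣ a - 1) (hq2 : (q : ℤ) ∣ b + 1)
    (hr1 : (r : ℤ) ∣ a + 1) (hr2 : (r : ℤ) ∣ b + 1) :
    ∀ m n : ℕ, 1 ≤ m → 1 ≤ n → 1 < Int.gcd (a ^ m - b ^ n) ((p : ℤ) * q * r) := by
  intro m n _ _
  have hpqr : (p : ℤ) * q * r ≠ 0 := by simp [hp.ne_zero, hq.ne_zero, hr.ne_zero]
  rw [← sub_neg_eq_add] at hp1 hq2 hr1 hr2
  rcases Nat.even_or_odd m with hm | hm
  · refine Int.one_lt_gcd_of_dvd_of_dvd hp.one_lt hpqr ?_ ⟨q * r, by ring⟩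
    exact dvd_pow_sub_pow_of_dvd_sub hp1 hp2 (by rw [hm.neg_one_pow, one_pow])
  rcases Nat.even_or_odd n with hn | hn
  · refine Int.one_lt_gcd_of_dvd_of_dvd hq.one_lt hpqr ?_ ⟨p * r, by ring⟩
    exact dvd_pow_sub_pow_of_dvd_sub hq1 hq2 (by rw [hn.neg_one_pow, one_pow])
  · refine Int.one_lt_gcd_of_dvd_of_dvd hr.one_lt hpqr ?_ ⟨p * q, by ring⟩
    exact dvd_pow_sub_pow_of_dvd_sub hr1 hr2 (by rw [hm.neg_one_pow, hn.neg_one_pow])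

/-- If `p, q, r` are distinct odd primes with `p ∣ (a+1, b-1)`, `q ∣ (a-1, b+1)` and
`r ∣ (a+1, b+1)`, then `gcd(a^m - b^n, p*q*r) > 1` for all integers `m, n ≥ 1`. -/
theorem covering_example_mod_two
    (a b : ℤ) (p q r : ℕ)
    (hp : p.Prime) (hq : q.Prime) (hr : r.Prime)
    (hpodd : Odd p) (hqodd : Odd q) (hrodd : Odd r)
    (hpq : p ≠ q) (hpr : p ≠ r) (hqr : q ≠ r)
    (hp1 : (p : ℤ) ∣ a + 1) (hp2 : (p : ℤ) ∣ b - 1)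
    (hq1 : (q : ℤ) ∣ a - 1) (hq2 : (q : ℤ) ∣ b + 1)
    (hr1 : (r : ℤ) ∣ a + 1) (hr2 : (r : ℤ) ∣ b + 1) :
    ∀ m n : ℕ, 1 ≤ m → 1 ≤ n → 1 < Int.gcd (a ^ m - b ^ n) ((p : ℤ) * q * r) :=
  covering_example_mod_two_general a b p q r hp hq hr hp1 hp2 hq1 hq2 hr1 hr2
end

section
/- Let a, b be integers and let p₁, p₂, p₃, p₄ be distinct primes, all greater than 3, such that: p₁ divides both a−1 and b²+b+1; p₂ divides both b−1 and a²+a+1; p₃ divides both b−a and a²+a+1; and p₄ divides both b−a² and a²+a+1. Then gcd(a^m − b^n, p₁·p₂·p₃·p₄) > 1 for all integers m, n ≥ 0. -/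
/-!
Modulo a prime `p ∣ a² + a + 1` we have `a³ ≡ 1`, so if moreover `b ≡ aᵏ` then
`aᵐ ≡ bⁿ` as soon as `m ≡ k n (mod 3)`. The four primes realise `b ≡ a⁰, a¹, a²` modulo
`p₂, p₃, p₄` and `a ≡ b⁰` modulo `p₁`, and these congruences cover all residues of `(m, n)`
modulo 3: `m ≡ 0`, `n ≡ 0`, or `m, n ∈ {1, 2}` with `m ≡ n` or `m ≡ 2n`.
-/

theorem pow_three_eq_one_of_sq_add_self_add_one_eq_zero {R : Type*} [CommRing R] {x : R}
    (hx : x ^ 2 + x + 1 = 0) : x ^ 3 = 1 := by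
  linear_combination (x - 1) * hx

theorem pow_eq_pow_pow_of_sq_add_self_add_one_eq_zero {R : Type*} [CommRing R] {x : R}
    (hx : x ^ 2 + x + 1 = 0) {k m n : ℕ} (h : m % 3 = k * n % 3) : x ^ m = (x ^ k) ^ n := by
  have hx3 := pow_three_eq_one_of_sq_add_self_add_one_eq_zero hx
  rw [← pow_mul, pow_eq_pow_mod m hx3, pow_eq_pow_mod (k * n) hx3, h]

theorem Int.dvd_pow_sub_pow_of_dvd_sq_add_self_add_one {p : ℕ} {a b : ℤ} {k m n : ℕ}
    (ha : (p : ℤ) ∣ a ^ 2 + a + 1) (hb : (p : ℤ) ∣ b - a ^ k) (h : m % 3 = k * n % 3) :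
    (p : ℤ) ∣ a ^ m - b ^ n := by
  rw [← ZMod.intCast_eq_intCast_iff_dvd_sub] at hb ⊢
  rw [← ZMod.intCast_zmod_eq_zero_iff_dvd] at ha
  push_cast at ha hb ⊢
  rw [← hb, pow_eq_pow_pow_of_sq_add_self_add_one_eq_zero ha h]

theorem Int.one_lt_gcd_of_dvd {p : ℕ} {x y : ℤ} (hp : 1 < p) (hy : y ≠ 0)
    (hpx : (p : ℤ) ∣ x) (hpy : (p : ℤ) ∣ y) : 1 < Int.gcd x y :=
  hp.trans_le <| Nat.le_of_dvd (Int.gcd_pos_of_ne_zero_right x hy)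
    (Int.natCast_dvd_natCast.mp (Int.dvd_coe_gcd hpx hpy))

theorem covering_example_mod_three_general
    (a b : ℤ) (p₁ p₂ p₃ p₄ : ℕ)
    (hp₁ : p₁.Prime) (hp₂ : p₂.Prime) (hp₃ : p₃.Prime) (hp₄ : p₄.Prime)
    (hd₁ : (p₁ : ℤ) ∣ a - 1) (hd₁' : (p₁ : ℤ) ∣ b ^ 2 + b + 1)
    (hd₂ : (p₂ : ℤ) ∣ b - 1) (hd₂' : (p₂ : ℤ) ∣ a ^ 2 + a + 1)
    (hd₃ : (p₃ : ℤ) ∣ b - a) (hd₃' : (p₃ : ℤ) ∣ a ^ 2 + a + 1)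
    (hd₄ : (p₄ : ℤ) ∣ b - a ^ 2) (hd₄' : (p₄ : ℤ) ∣ a ^ 2 + a + 1) :
    ∀ m n : ℕ, 1 < Int.gcd (a ^ m - b ^ n) ((p₁ : ℤ) * p₂ * p₃ * p₄) := by
  intro m n
  have hN : (p₁ : ℤ) * p₂ * p₃ * p₄ ≠ 0 := by
    simp only [ne_eq, mul_eq_zero, Nat.cast_eq_zero, hp₁.ne_zero, hp₂.ne_zero, hp₃.ne_zero,
      hp₄.ne_zero, or_self, not_false_eq_true]
  obtain h | h | h | h : n % 3 = 0 ∨ m % 3 = 0 ∨ m % 3 = n % 3 ∨ m % 3 = 2 * n % 3 := by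
    omega
  · refine Int.one_lt_gcd_of_dvd hp₁.one_lt hN (dvd_sub_comm.mp ?_)
      (((dvd_mul_right _ _).mul_right _).mul_right _)
    exact Int.dvd_pow_sub_pow_of_dvd_sq_add_self_add_one hd₁' (by rwa [pow_zero]) (by omega)
  · exact Int.one_lt_gcd_of_dvd hp₂.one_lt hN
      (Int.dvd_pow_sub_pow_of_dvd_sq_add_self_add_one hd₂' (by rwa [pow_zero]) (by omega))
      (((dvd_mul_left _ _).mul_right _).mul_right _)
  · exact Int.one_lt_gcd_of_dvd hp₃.one_lt hN
      (Int.dvd_pow_sub_pow_of_dvd_sq_add_self_add_one hd₃' (by rwa [pow_one]) (by omega))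
      ((dvd_mul_left _ _).mul_right _)
  · exact Int.one_lt_gcd_of_dvd hp₄.one_lt hN
      (Int.dvd_pow_sub_pow_of_dvd_sq_add_self_add_one hd₄' hd₄ (by omega)) (dvd_mul_left _ _)

/-- If `p₁, p₂, p₃, p₄` are distinct primes `> 3` with `p₁ ∣ (a-1, b²+b+1)`,
`p₂ ∣ (b-1, a²+a+1)`, `p₃ ∣ (b-a, a²+a+1)` and `p₄ ∣ (b-a², a²+a+1)`, then
`gcd(a^m - b^n, p₁p₂p₃p₄) > 1` for all integers `m, n ≥ 0`. -/
theorem covering_example_mod_three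
    (a b : ℤ) (p₁ p₂ p₃ p₄ : ℕ)
    (hp₁ : p₁.Prime) (hp₂ : p₂.Prime) (hp₃ : p₃.Prime) (hp₄ : p₄.Prime)
    (hg₁ : 3 < p₁) (hg₂ : 3 < p₂) (hg₃ : 3 < p₃) (hg₄ : 3 < p₄)
    (h12 : p₁ ≠ p₂) (h13 : p₁ ≠ p₃) (h14 : p₁ ≠ p₄)
    (h23 : p₂ ≠ p₃) (h24 : p₂ ≠ p₄) (h34 : p₃ ≠ p₄)
    (hd₁ : (p₁ : ℤ) ∣ a - 1) (hd₁' : (p₁ : ℤ) ∣ b ^ 2 + b + 1)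
    (hd₂ : (p₂ : ℤ) ∣ b - 1) (hd₂' : (p₂ : ℤ) ∣ a ^ 2 + a + 1)
    (hd₃ : (p₃ : ℤ) ∣ b - a) (hd₃' : (p₃ : ℤ) ∣ a ^ 2 + a + 1)
    (hd₄ : (p₄ : ℤ) ∣ b - a ^ 2) (hd₄' : (p₄ : ℤ) ∣ a ^ 2 + a + 1) :
    ∀ m n : ℕ, 1 < Int.gcd (a ^ m - b ^ n) ((p₁ : ℤ) * p₂ * p₃ * p₄) :=
  covering_example_mod_three_general a b p₁ p₂ p₃ p₄ hp₁ hp₂ hp₃ hp₄ hd₁ hd₁' hd₂ hd₂' hd₃ hd₃' hd₄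
    hd₄'
end

section
/- For all integers m, n ≥ 0, gcd(15226^m − 67419^n, 7·13·19·31) > 1. -/
/-!
Each of 15226 and 67419 is a power of a cube root of unity modulo every prime
p ∈ {7, 13, 19, 31}: modulo 7 they are 1 and 2, modulo 13 they are 3 and 1, modulo 19 both are 7,
and modulo 31 they are 5 and 5². Hence p divides 15226^m - 67419^n as soon as a linear
congruence in (m, n) modulo 3 holds, and the four congruences m ≡ 0, n ≡ 0, m ≡ n, m ≡ 2n
cover all nine residue pairs.
-/

theorem Int.dvd_pow_sub_pow_of_intCast_eq_pow {p k i j m n : ℕ} {a b : ℤ} {g : ZMod p}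
    (hg : g ^ k = 1) (ha : (a : ZMod p) = g ^ i) (hb : (b : ZMod p) = g ^ j)
    (hmn : i * m ≡ j * n [MOD k]) : (p : ℤ) ∣ a ^ m - b ^ n := by
  rw [← ZMod.intCast_zmod_eq_zero_iff_dvd]
  push_cast
  rw [ha, hb, ← pow_mul, ← pow_mul, sub_eq_zero]
  exact pow_eq_pow_of_modEq hmn hg

theorem exists_factor_dvd_15226_pow_sub_67419_pow (m n : ℕ) :
    ∃ p : ℕ, 1 < p ∧ (p : ℤ) ∣ 7 * 13 * 19 * 31 ∧
      (p : ℤ) ∣ 15226 ^ m - 67419 ^ n := by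
  by_cases hm : m % 3 = 0
  · refine ⟨13, by norm_num, by norm_num, ?_⟩
    exact Int.dvd_pow_sub_pow_of_intCast_eq_pow (g := (3 : ZMod 13)) (k := 3) (i := 1) (j := 0)
      (by decide) (by decide) (by decide) (by simp only [Nat.ModEq]; omega)
  by_cases hn : n % 3 = 0
  · refine ⟨7, by norm_num, by norm_num, ?_⟩
    exact Int.dvd_pow_sub_pow_of_intCast_eq_pow (g := (2 : ZMod 7)) (k := 3) (i := 0) (j := 1)
      (by decide) (by decide) (by decide) (by simp only [Nat.ModEq]; omega)
  by_cases hmn : m % 3 = n % 3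
  · refine ⟨19, by norm_num, by norm_num, ?_⟩
    exact Int.dvd_pow_sub_pow_of_intCast_eq_pow (g := (7 : ZMod 19)) (k := 3) (i := 1) (j := 1)
      (by decide) (by decide) (by decide) (by simp only [Nat.ModEq]; omega)
  have hm2n : 1 * m ≡ 2 * n [MOD 3] := by
    have : m % 3 = 1 ∧ n % 3 = 2 ∨ m % 3 = 2 ∧ n % 3 = 1 := by omega
    rcases this with ⟨hm, hn⟩ | ⟨hm, hn⟩ <;> simp [Nat.ModEq, Nat.mul_mod, hm, hn]
  refine ⟨31, by norm_num, by norm_num, ?_⟩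
  exact Int.dvd_pow_sub_pow_of_intCast_eq_pow (g := (5 : ZMod 31)) (k := 3) (i := 1) (j := 2)
    (by decide) (by decide) (by decide) hm2n

/-- `gcd(15226^m - 67419^n, 7·13·19·31) > 1` for all integers `m, n ≥ 0`. -/
theorem covering_example_15226_67419 :
    ∀ m n : ℕ, 1 < Int.gcd ((15226 : ℤ) ^ m - (67419 : ℤ) ^ n) (7 * 13 * 19 * 31) := by
  intro m n
  obtain ⟨p, hp, hpN, hpx⟩ := exists_factor_dvd_15226_pow_sub_67419_pow m n
  exact Int.one_lt_gcd_of_dvd hp (by norm_num) hpx hpN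
end

section
/- Let a, b ≥ 2 be integers and let Q ≥ 2 be an integer with gcd(Q, a·b) = 1. If gcd(a^m − b^n, Q) > 1 for all integers m, n ≥ 1, then gcd(a−1, Q) > 1 and gcd(b−1, Q) > 1. -/
/-!
By Euler's theorem `a ^ φ(Q) ≡ 1` and `b ^ φ(Q) ≡ 1` modulo `Q`. Since `gcd(x, Q)` depends only
on `x mod Q`, the covering hypothesis at `(m, n) = (1, φ(Q))` gives `1 < gcd(a - 1, Q)`, and at
`(m, n) = (φ(Q), 1)` it gives `1 < gcd(1 - b, Q) = gcd(b - 1, Q)`.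
-/

open Nat

theorem Int.ModEq.gcd_eq {n x y : ℤ} (h : x ≡ y [ZMOD n]) : Int.gcd x n = Int.gcd y n := by
  rw [← Int.gcd_emod x, h, Int.gcd_emod]

theorem Int.ModEq.pow_totient {n x : ℤ} (h : IsCoprime x n) : x ^ φ n.natAbs ≡ 1 [ZMOD n] := by
  have hunit : IsUnit (x : ZMod n.natAbs) :=
    (ZMod.coe_int_isUnit_iff_isCoprime x n.natAbs).mpr (by simpa using h.symm.abs_left)
  rw [← Int.modEq_natAbs, ← ZMod.intCast_eq_intCast_iff, Int.cast_pow, Int.cast_one,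
    ← hunit.unit_spec, ← Units.val_pow_eq_pow_val, ZMod.pow_totient, Units.val_one]

theorem Int.gcd_sub_pow_totient {n x y : ℤ} (hy : IsCoprime y n) :
    Int.gcd (x - y ^ φ n.natAbs) n = Int.gcd (x - 1) n :=
  ((Int.ModEq.refl x).sub (Int.ModEq.pow_totient hy)).gcd_eq

theorem gcd_a_sub_one_gt_one_of_covering_general
    (a b Q : ℤ) (hQ : 2 ≤ Q)
    (hcop : Int.gcd Q (a * b) = 1)
    (hcov : ∀ m n : ℕ, 1 ≤ m → 1 ≤ n → 1 < Int.gcd (a ^ m - b ^ n) Q) :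
    1 < Int.gcd (a - 1) Q ∧ 1 < Int.gcd (b - 1) Q := by
  have hk : 1 ≤ φ Q.natAbs := Nat.totient_pos.mpr (by omega)
  have hab : IsCoprime (a * b) Q := (Int.isCoprime_iff_gcd_eq_one.mpr hcop).symm
  constructor
  · simpa [Int.gcd_sub_pow_totient hab.of_mul_left_right] using hcov 1 _ le_rfl hk
  · have := hcov _ 1 hk le_rfl
    rwa [← Int.neg_gcd, neg_sub, pow_one, Int.gcd_sub_pow_totient hab.of_mul_left_left] at this

/-- If `a, b ≥ 2`, `Q ≥ 2` with `gcd(Q, ab) = 1`, and `gcd(a^m - b^n, Q) > 1`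
for all `m, n ≥ 1`, then `gcd(a-1, Q) > 1` and `gcd(b-1, Q) > 1`. -/
theorem gcd_a_sub_one_gt_one_of_covering
    (a b Q : ℤ) (ha : 2 ≤ a) (hb : 2 ≤ b) (hQ : 2 ≤ Q)
    (hcop : Int.gcd Q (a * b) = 1)
    (hcov : ∀ m n : ℕ, 1 ≤ m → 1 ≤ n → 1 < Int.gcd (a ^ m - b ^ n) Q) :
    1 < Int.gcd (a - 1) Q ∧ 1 < Int.gcd (b - 1) Q :=
  gcd_a_sub_one_gt_one_of_covering_general a b Q hQ hcop hcov
end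

section
/- Let a, b ≥ 2 be integers with gcd(a, b) = 1 and gcd(a−1, b−1) = 1, and suppose that a−1 or b−1 is a power of 2 (i.e. a = 2 or a = 2^ℓ + 1 for some ℓ ≥ 1, or the same for b). Then for every nonzero integer Q there exist integers m, n ≥ 1 with gcd(a^m − b^n, Q) = 1. In particular, no nonzero integer Q satisfies gcd(a^m − b^n, Q) > 1 for all m, n ≥ 1. -/
/-!
Take `n = φ(|Q|)` and a prime `p ∣ Q` dividing `a - b ^ n`. Since `gcd(a, b) = 1`, `p ∤ b`, so by
Fermat `b ^ n ≡ 1 [ZMOD p]` and `p ∣ a - 1`. If `a - 1` is a power of `2`, then `p = 2`, which divides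
`b (b - 1)`; as `p ∤ b` we get `p ∣ b - 1`, contradicting `gcd(a - 1, b - 1) = 1`. So
`gcd(a - b ^ n, Q) = 1`, and symmetrically `gcd(a ^ n - b, Q) = 1` when `b - 1` is a power of `2`.
-/

lemma Int.pow_totient_natAbs_modEq_one {p : ℕ} (hp : p.Prime) {b Q : ℤ}
    (hpQ : (p : ℤ) ∣ Q) (hpb : ¬ (p : ℤ) ∣ b) : b ^ Q.natAbs.totient ≡ 1 [ZMOD p] := by
  have hcop : IsCoprime b p :=
    ((Nat.prime_iff_prime_int.mp hp).coprime_iff_not_dvd.mpr hpb).symm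
  obtain ⟨k, hk⟩ : p - 1 ∣ Q.natAbs.totient := by
    simpa [Nat.totient_prime hp] using Nat.totient_dvd_of_dvd (Int.natCast_dvd.mp hpQ)
  rw [hk, pow_mul]
  simpa using (Int.ModEq.pow_card_sub_one_eq_one hp hcop).pow k

lemma Int.gcd_sub_pow_totient_eq_one {a b : ℤ} (hab : IsCoprime a b)
    (hab1 : IsCoprime (a - 1) (b - 1))
    (ha : ∀ p : ℕ, p.Prime → (p : ℤ) ∣ a - 1 → (p : ℤ) ∣ b * (b - 1))
    {Q : ℤ} (hQ : Q ≠ 0) : Int.gcd (a - b ^ Q.natAbs.totient) Q = 1 := by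
  refine Nat.coprime_of_dvd fun p hp hpx hpQ => ?_
  rw [← Int.natCast_dvd] at hpx hpQ
  have hprime : Prime (p : ℤ) := Nat.prime_iff_prime_int.mp hp
  have hnot_unit : ¬ IsUnit (p : ℤ) := hprime.not_isUnit
  have hn : Q.natAbs.totient ≠ 0 := (Nat.totient_pos.mpr (Int.natAbs_pos.mpr hQ)).ne'
  have hpb : ¬ (p : ℤ) ∣ b := fun hpb =>
    hnot_unit <| hab.isUnit_of_dvd' (by simpa using hpx.add (dvd_pow hpb hn)) hpb
  have hpa1 : (p : ℤ) ∣ a - 1 := by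
    simpa only [sub_sub_sub_cancel_right] using
      hpx.sub (Int.pow_totient_natAbs_modEq_one hp hpQ hpb).dvd
  have hpb1 : (p : ℤ) ∣ b - 1 := (hprime.dvd_or_dvd (ha p hp hpa1)).resolve_left hpb
  exact hnot_unit (hab1.isUnit_of_dvd' hpa1 hpb1)

lemma Int.prime_dvd_mul_sub_one_of_sub_one_eq_two_pow {a : ℤ} {ℓ : ℕ} (ha : a - 1 = 2 ^ ℓ)
    (b : ℤ) (p : ℕ) (hp : p.Prime) (hpa : (p : ℤ) ∣ a - 1) : (p : ℤ) ∣ b * (b - 1) := by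
  rw [ha] at hpa
  have hp2 : p = 2 := (Nat.prime_dvd_prime_iff_eq hp Nat.prime_two).mp <| by
    exact_mod_cast (Nat.prime_iff_prime_int.mp hp).dvd_of_dvd_pow hpa
  subst hp2
  exact even_iff_two_dvd.mp (Int.even_mul_pred_self b)

theorem no_covering_in_exceptional_cases_general
    (a b : ℤ)
    (hab : Int.gcd a b = 1) (hab1 : Int.gcd (a - 1) (b - 1) = 1)
    (hpow : (∃ ℓ : ℕ, a - 1 = 2 ^ ℓ) ∨ (∃ ℓ : ℕ, b - 1 = 2 ^ ℓ)) :
    (∀ Q : ℤ, Q ≠ 0 → ∃ m n : ℕ, 1 ≤ m ∧ 1 ≤ n ∧ Int.gcd (a ^ m - b ^ n) Q = 1) ∧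
    ¬ ∃ Q : ℤ, Q ≠ 0 ∧ ∀ m n : ℕ, 1 ≤ m → 1 ≤ n → 1 < Int.gcd (a ^ m - b ^ n) Q := by
  rw [← Int.isCoprime_iff_gcd_eq_one] at hab hab1
  have coprime : ∀ Q : ℤ, Q ≠ 0 → ∃ m n : ℕ, 1 ≤ m ∧ 1 ≤ n ∧
      Int.gcd (a ^ m - b ^ n) Q = 1 := by
    intro Q hQ
    have hn : 1 ≤ Q.natAbs.totient := Nat.totient_pos.mpr (Int.natAbs_pos.mpr hQ)
    rcases hpow with ⟨ℓ, hℓ⟩ | ⟨ℓ, hℓ⟩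
    · refine ⟨1, _, le_rfl, hn, ?_⟩
      simpa using Int.gcd_sub_pow_totient_eq_one hab hab1
        (Int.prime_dvd_mul_sub_one_of_sub_one_eq_two_pow hℓ b) hQ
    · refine ⟨_, 1, hn, le_rfl, ?_⟩
      rw [pow_one, ← Int.neg_gcd, neg_sub]
      exact Int.gcd_sub_pow_totient_eq_one hab.symm hab1.symm
        (Int.prime_dvd_mul_sub_one_of_sub_one_eq_two_pow hℓ a) hQ
  refine ⟨coprime, fun ⟨Q, hQ, hall⟩ => ?_⟩
  obtain ⟨m, n, hm, hn, hgcd⟩ := coprime Q hQ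
  exact (hall m n hm hn).ne' hgcd

/-- If `a, b ≥ 2` with `gcd(a,b) = 1` and `gcd(a-1,b-1) = 1`, and `a-1` or `b-1`
is a power of `2` (i.e. `a = 2` or `a = 2^ℓ + 1`, or the same for `b`), then for
every nonzero integer `Q` there are `m, n ≥ 1` with `gcd(a^m - b^n, Q) = 1`;
in particular no nonzero `Q` satisfies `gcd(a^m - b^n, Q) > 1` for all `m, n ≥ 1`. -/
theorem no_covering_in_exceptional_cases
    (a b : ℤ) (ha : 2 ≤ a) (hb : 2 ≤ b)
    (hab : Int.gcd a b = 1) (hab1 : Int.gcd (a - 1) (b - 1) = 1)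
    (hpow : (∃ ℓ : ℕ, a - 1 = 2 ^ ℓ) ∨ (∃ ℓ : ℕ, b - 1 = 2 ^ ℓ)) :
    (∀ Q : ℤ, Q ≠ 0 → ∃ m n : ℕ, 1 ≤ m ∧ 1 ≤ n ∧ Int.gcd (a ^ m - b ^ n) Q = 1) ∧
    ¬ ∃ Q : ℤ, Q ≠ 0 ∧ ∀ m n : ℕ, 1 ≤ m → 1 ≤ n → 1 < Int.gcd (a ^ m - b ^ n) Q :=
  no_covering_in_exceptional_cases_general a b hab hab1 hpow
end

section
/- For all integers m, n ≥ 0, gcd(41^m − 34^n, 105) > 1; indeed 3 divides 41^m − 34^n whenever m is even, 5 divides 41^m − 34^n whenever n is even, and 7 divides 41^m − 34^n whenever m ≡ n (mod 2). -/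
/-! Modulo 3, 5 and 7 the bases are `41 ≡ -1, 1, -1` and `34 ≡ 1, -1, -1`, so `41^m - 34^n`
vanishes mod 3 for even `m`, mod 5 for even `n`, and mod 7 when `m ≡ n (mod 2)`. Every pair
`(m, n)` falls under one of these three parity conditions, so one of the primes 3, 5, 7 divides
both `41^m - 34^n` and `105`. -/

theorem neg_one_pow_eq_of_modEq_two {R : Type*} [Ring R] {m n : ℕ}
    (h : m ≡ n [MOD 2]) : (-1 : R) ^ m = (-1) ^ n := by
  rw [neg_one_pow_eq_pow_mod_two, h, ← neg_one_pow_eq_pow_mod_two]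

theorem Int.dvd_pow_sub_pow_of_modEq_neg_one_pow {d a b : ℤ} {i j m n : ℕ}
    (ha : a ≡ (-1) ^ i [ZMOD d]) (hb : b ≡ (-1) ^ j [ZMOD d]) (h : i * m ≡ j * n [MOD 2]) :
    d ∣ a ^ m - b ^ n := by
  have hbn : b ^ n ≡ a ^ m [ZMOD d] :=
    calc b ^ n ≡ (-1) ^ (j * n) [ZMOD d] := by rw [pow_mul]; exact hb.pow n
      _ = (-1) ^ (i * m) := neg_one_pow_eq_of_modEq_two h.symm
      _ ≡ a ^ m [ZMOD d] := by rw [pow_mul]; exact (ha.pow m).symm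
  exact hbn.dvd

theorem Int.one_lt_gcd_of_dvd_s12 {p a b : ℤ} (hp : 1 < p) (ha : p ∣ a) (hb : p ∣ b) (hb0 : b ≠ 0) :
    1 < Int.gcd a b := by
  have hgcd : p ≤ Int.gcd a b :=
    Int.le_of_dvd (by exact_mod_cast Int.gcd_pos_of_ne_zero_right a hb0) (Int.dvd_coe_gcd ha hb)
  omega

/-- For all `m, n ≥ 0`, `gcd(41^m - 34^n, 105) > 1`; indeed `3 ∣ 41^m - 34^n` when
`m` is even, `5 ∣ 41^m - 34^n` when `n` is even, and `7 ∣ 41^m - 34^n` when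
`m ≡ n (mod 2)`. -/
theorem covering_example_41_34 :
    ∀ m n : ℕ,
      1 < Int.gcd ((41 : ℤ) ^ m - (34 : ℤ) ^ n) 105 ∧
      (2 ∣ m → (3 : ℤ) ∣ (41 : ℤ) ^ m - (34 : ℤ) ^ n) ∧
      (2 ∣ n → (5 : ℤ) ∣ (41 : ℤ) ^ m - (34 : ℤ) ^ n) ∧
      (m ≡ n [MOD 2] → (7 : ℤ) ∣ (41 : ℤ) ^ m - (34 : ℤ) ^ n) := by
  intro m n
  have h3 (hm : 2 ∣ m) : (3 : ℤ) ∣ (41 : ℤ) ^ m - (34 : ℤ) ^ n :=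
    Int.dvd_pow_sub_pow_of_modEq_neg_one_pow (i := 1) (j := 0) (by decide) (by decide)
      (by simpa using (Nat.modEq_zero_iff_dvd.mpr hm))
  have h5 (hn : 2 ∣ n) : (5 : ℤ) ∣ (41 : ℤ) ^ m - (34 : ℤ) ^ n :=
    Int.dvd_pow_sub_pow_of_modEq_neg_one_pow (i := 0) (j := 1) (by decide) (by decide)
      (by simpa using (Nat.modEq_zero_iff_dvd.mpr hn).symm)
  have h7 (hmn : m ≡ n [MOD 2]) : (7 : ℤ) ∣ (41 : ℤ) ^ m - (34 : ℤ) ^ n :=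
    Int.dvd_pow_sub_pow_of_modEq_neg_one_pow (i := 1) (j := 1) (by decide) (by decide)
      (by simpa using hmn)
  refine ⟨?_, h3, h5, h7⟩
  rcases Nat.even_or_odd m with hm | hm
  · exact Int.one_lt_gcd_of_dvd_s12 (by norm_num) (h3 hm.two_dvd) (by norm_num) (by norm_num)
  rcases Nat.even_or_odd n with hn | hn
  · exact Int.one_lt_gcd_of_dvd_s12 (by norm_num) (h5 hn.two_dvd) (by norm_num) (by norm_num)
  have hmn : m ≡ n [MOD 2] := (Nat.odd_iff.mp hm).trans (Nat.odd_iff.mp hn).symm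
  exact Int.one_lt_gcd_of_dvd_s12 (by norm_num) (h7 hmn) (by norm_num) (by norm_num)
end

section
/- For all integers m, n ≥ 1, if |41^m − 34^n| is a prime number, then |41^m − 34^n| ∈ {3, 5, 7}. -/
/-- For `m, n ≥ 1`, if `|41^m - 34^n|` is prime then it is `3`, `5` or `7`. -/
theorem prime_values_41_34 :
    ∀ m n : ℕ, 1 ≤ m → 1 ≤ n →
      ((41 : ℤ) ^ m - (34 : ℤ) ^ n).natAbs.Prime →
      ((41 : ℤ) ^ m - (34 : ℤ) ^ n).natAbs = 3 ∨
      ((41 : ℤ) ^ m - (34 : ℤ) ^ n).natAbs = 5 ∨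
      ((41 : ℤ) ^ m - (34 : ℤ) ^ n).natAbs = 7 := by
  intro m n hm hn hp
  set x : ℤ := (41 : ℤ) ^ m - (34 : ℤ) ^ n with hx
  have key : (3 : ℤ) ∣ x ∨ (5 : ℤ) ∣ x ∨ (7 : ℤ) ∣ x := by
    rcases Nat.even_or_odd m with hme | hmo
    · left
      have : ((x : ZMod 3) = 0) := by
        have h41 : ((41 : ZMod 3)) = -1 := by decide
        have h34 : ((34 : ZMod 3)) = 1 := by decide
        simp [hx, h41, h34, hme.neg_one_pow]
      exact (ZMod.intCast_zmod_eq_zero_iff_dvd x 3).mp this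
    rcases Nat.even_or_odd n with hne | hno
    · right; left
      have : ((x : ZMod 5) = 0) := by
        have h34 : ((34 : ZMod 5)) = -1 := by decide
        have h41 : ((41 : ZMod 5)) = 1 := by decide
        simp [hx, h34, h41, hne.neg_one_pow]
      exact (ZMod.intCast_zmod_eq_zero_iff_dvd x 5).mp this
    · right; right
      have : ((x : ZMod 7) = 0) := by
        have h34 : ((34 : ZMod 7)) = -1 := by decide
        have h41 : ((41 : ZMod 7)) = -1 := by decide
        simp [hx, h34, h41, hmo.neg_one_pow, hno.neg_one_pow]
      exact (ZMod.intCast_zmod_eq_zero_iff_dvd x 7).mp this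
  rcases key with h | h | h
  · left
    have : 3 ∣ x.natAbs := by
      simpa using Int.natAbs_dvd_natAbs.mpr h
    exact ((Nat.prime_dvd_prime_iff_eq (by norm_num) hp).mp this).symm
  · right; left
    have : 5 ∣ x.natAbs := by
      simpa using Int.natAbs_dvd_natAbs.mpr h
    exact ((Nat.prime_dvd_prime_iff_eq (by norm_num) hp).mp this).symm
  · right; right
    have : 7 ∣ x.natAbs := by
      simpa using Int.natAbs_dvd_natAbs.mpr h
    exact ((Nat.prime_dvd_prime_iff_eq (by norm_num) hp).mp this).symm
end

section
/- For all integers m, n ≥ 1, if |51^m − 64^n| is a prime number, then 64^n − 51^m = 13 (so the prime equals 13). -/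
private lemma eight_pow_13 (n : ℕ) : (8 : ZMod 13) ^ n = 8 ^ (n % 4) := by
  conv_lhs => rw [← Nat.div_add_mod n 4]
  rw [pow_add, pow_mul, show (8:ZMod 13)^4 = 1 from by decide, one_pow, one_mul]

private lemma three_pow_8 (m : ℕ) (h : Odd m) : (3 : ZMod 8) ^ m = 3 := by
  obtain ⟨k, rfl⟩ := h
  rw [pow_add, pow_mul, show (3:ZMod 8)^2 = 1 from by decide, one_pow, one_mul, pow_one]

/-- For `m, n ≥ 1`, if `|51^m - 64^n|` is prime then `64^n - 51^m = 13`
(so the prime equals `13`). -/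
theorem prime_values_51_64 :
    ∀ m n : ℕ, 1 ≤ m → 1 ≤ n →
      ((51 : ℤ) ^ m - (64 : ℤ) ^ n).natAbs.Prime →
      (64 : ℤ) ^ n - (51 : ℤ) ^ m = 13 := by
  intro m n hm hn hp
  rcases Nat.even_or_odd m with hme | hmo
  · -- m even: factor as difference of squares
    exfalso
    obtain ⟨k, hk⟩ := hme
    have hk1 : 1 ≤ k := by omega
    have hfac : (51:ℤ)^m - 64^n = ((51:ℤ)^k - 8^n) * ((51:ℤ)^k + 8^n) := by
      rw [hk, pow_add, show (64:ℤ) = 8*8 by norm_num, mul_pow]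
      ring
    have hb : (8:ℤ) ≤ 8^n := le_self_pow₀ (by norm_num) (by omega)
    have ha : (1:ℤ) ≤ 51^k := one_le_pow₀ (by norm_num)
    rw [hfac, Int.natAbs_mul] at hp
    rw [Nat.prime_mul_iff] at hp
    have h1 : ((51:ℤ)^k - 8^n).natAbs = 1 := by
      rcases hp with ⟨_, h⟩ | ⟨_, h⟩
      · omega
      · exact h
    have hd1 : (51:ℤ)^k - 8^n = 1 ∨ (51:ℤ)^k - 8^n = -1 := by omega
    have hc : (((51:ℤ)^k - (8:ℤ)^n : ℤ) : ZMod 13) = (-1)^k - 8^(n % 4) := by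
      push_cast
      rw [show (51:ZMod 13) = -1 by decide, show (8:ZMod 13) = 8 by decide,
        eight_pow_13]
    rcases hd1 with h | h <;> rw [h] at hc <;>
      rcases Nat.even_or_odd k with hke | hko <;>
      [rw [hke.neg_one_pow] at hc; rw [hko.neg_one_pow] at hc;
       rw [hke.neg_one_pow] at hc; rw [hko.neg_one_pow] at hc] <;>
      · have h4 : n % 4 < 4 := Nat.mod_lt _ (by norm_num)
        interval_cases h : n % 4 <;> revert hc <;> decide
  · rcases Nat.even_or_odd n with hne | hno
    · -- m odd, n even : 5 ∣ D, then mod 13 contradiction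
      exfalso
      have h5 : ((((51:ℤ)^m - 64^n : ℤ) : ZMod 5)) = 0 := by
        push_cast
        rw [show (51:ZMod 5) = 1 by decide, show (64:ZMod 5) = -1 by decide,
          one_pow, hne.neg_one_pow]
        ring
      have h5' : (5:ℤ) ∣ (51:ℤ)^m - 64^n := by
        rwa [ZMod.intCast_zmod_eq_zero_iff_dvd] at h5
      have h5n : (5:ℕ) ∣ ((51:ℤ)^m - 64^n).natAbs := by
        exact Int.natAbs_dvd_natAbs.mpr h5'
      have h5e : ((51:ℤ)^m - 64^n).natAbs = 5 := by
        rcases (hp.eq_one_or_self_of_dvd 5 h5n) with h | h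
        · omega
        · omega
      have : (51:ℤ)^m - 64^n = 5 ∨ (51:ℤ)^m - 64^n = -5 := by
        rcases Int.natAbs_eq ((51:ℤ)^m - 64^n) with h | h <;> omega
      have h13 : (((51:ℤ)^m - 64^n : ℤ) : ZMod 13) = -2 := by
        push_cast
        rw [show (51:ZMod 13) = -1 by decide, show (64:ZMod 13) = -1 by decide,
          hmo.neg_one_pow, hne.neg_one_pow]
        ring
      rcases this with h | h <;> rw [h] at h13 <;> revert h13 <;> decide
    · -- m odd, n odd : 13 ∣ D
      have h13 : ((((51:ℤ)^m - 64^n : ℤ)) : ZMod 13) = 0 := by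
        push_cast
        rw [show (51:ZMod 13) = -1 by decide, show (64:ZMod 13) = -1 by decide,
          hmo.neg_one_pow, hno.neg_one_pow]
        ring
      have h13' : (13:ℤ) ∣ (51:ℤ)^m - 64^n := by
        rwa [ZMod.intCast_zmod_eq_zero_iff_dvd] at h13
      have h13n : (13:ℕ) ∣ ((51:ℤ)^m - 64^n).natAbs := by
        exact Int.natAbs_dvd_natAbs.mpr h13'
      have h13e : ((51:ℤ)^m - 64^n).natAbs = 13 := by
        rcases (hp.eq_one_or_self_of_dvd 13 h13n) with h | h <;> omega
      have hd : (51:ℤ)^m - 64^n = 13 ∨ (51:ℤ)^m - 64^n = -13 := by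
        rcases Int.natAbs_eq ((51:ℤ)^m - 64^n) with h | h <;> omega
      rcases hd with h | h
      · exfalso
        have h8 : (((51:ℤ)^m - 64^n : ℤ) : ZMod 8) = 3 := by
          push_cast
          rw [show (51:ZMod 8) = 3 by decide, show (64:ZMod 8) = 0 by decide,
            three_pow_8 m hmo, zero_pow (by omega), sub_zero]
        rw [h] at h8
        revert h8; decide
      · linarith
end

section
/- For all integers m, n ≥ 0, gcd(13^m − 356^n, 3·5·7·17) > 1; indeed 3 divides 13^m − 356^n when n ≡ 0 (mod 2), 7 divides it when m ≡ n (mod 2), 5 divides it when m ≡ 0 (mod 4), and 17 divides it when m ≡ 2 (mod 4) and n ≡ 1 (mod 2). -/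
/-!
Each prime `p ∣ 3·5·7·17` divides `13^m - 356^n` on a set of exponent pairs described by
residues of `m` and `n` modulo the orders of `13` and `356` in `ZMod p`: these orders are
`(1, 2)` for `p = 3`, `(2, 2)` for `p = 7`, `(4, 1)` for `p = 5` and `(4, 2)` for `p = 17`.
The four resulting residue conditions cover every pair `(m, n)`, so some prime factor of
`1785` always divides `13^m - 356^n`.
-/

theorem Int.one_lt_gcd_of_dvd_s19 {d : ℕ} {x y : ℤ} (hd : 1 < d) (hy : y ≠ 0)
    (hdx : (d : ℤ) ∣ x) (hdy : (d : ℤ) ∣ y) : 1 < Int.gcd x y :=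
  hd.trans_le <| Nat.le_of_dvd (Int.gcd_pos_of_ne_zero_right x hy)
    (Int.natCast_dvd_natCast.mp (Int.dvd_coe_gcd hdx hdy))

theorem Int.dvd_pow_sub_pow_of_pow_mod_eq {d k l m n : ℕ} {a b : ℤ}
    (ha : (a : ZMod d) ^ k = 1) (hb : (b : ZMod d) ^ l = 1)
    (h : (a : ZMod d) ^ (m % k) = (b : ZMod d) ^ (n % l)) : (d : ℤ) ∣ a ^ m - b ^ n := by
  rw [← ZMod.intCast_zmod_eq_zero_iff_dvd, Int.cast_sub, Int.cast_pow, Int.cast_pow,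
    pow_eq_pow_mod m ha, pow_eq_pow_mod n hb, h, sub_self]

/-- For all `m, n ≥ 0`, `gcd(13^m - 356^n, 3·5·7·17) > 1`; indeed `3` divides
`13^m - 356^n` when `n ≡ 0 (mod 2)`, `7` divides it when `m ≡ n (mod 2)`, `5`
divides it when `m ≡ 0 (mod 4)`, and `17` divides it when `m ≡ 2 (mod 4)` and
`n ≡ 1 (mod 2)`. -/
theorem covering_example_13_356 :
    ∀ m n : ℕ,
      1 < Int.gcd ((13 : ℤ) ^ m - (356 : ℤ) ^ n) (3 * 5 * 7 * 17) ∧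
      (2 ∣ n → (3 : ℤ) ∣ (13 : ℤ) ^ m - (356 : ℤ) ^ n) ∧
      (m ≡ n [MOD 2] → (7 : ℤ) ∣ (13 : ℤ) ^ m - (356 : ℤ) ^ n) ∧
      (4 ∣ m → (5 : ℤ) ∣ (13 : ℤ) ^ m - (356 : ℤ) ^ n) ∧
      (m % 4 = 2 → n % 2 = 1 → (17 : ℤ) ∣ (13 : ℤ) ^ m - (356 : ℤ) ^ n) := by
  intro m n
  have h3 (hn : 2 ∣ n) : (3 : ℤ) ∣ 13 ^ m - 356 ^ n :=
    Int.dvd_pow_sub_pow_of_pow_mod_eq (k := 1) (l := 2) (by decide) (by decide)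
      (by rw [Nat.mod_one, Nat.mod_eq_zero_of_dvd hn, pow_zero, pow_zero])
  have h7 (h : m ≡ n [MOD 2]) : (7 : ℤ) ∣ 13 ^ m - 356 ^ n :=
    Int.dvd_pow_sub_pow_of_pow_mod_eq (k := 2) (l := 2) (by decide) (by decide)
      (by rw [show m % 2 = n % 2 from h]; exact congrArg (· ^ (n % 2)) (by decide))
  have h5 (hm : 4 ∣ m) : (5 : ℤ) ∣ 13 ^ m - 356 ^ n :=
    Int.dvd_pow_sub_pow_of_pow_mod_eq (k := 4) (l := 1) (by decide) (by decide)
      (by rw [Nat.mod_one, Nat.mod_eq_zero_of_dvd hm, pow_zero, pow_zero])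
  have h17 (hm : m % 4 = 2) (hn : n % 2 = 1) : (17 : ℤ) ∣ 13 ^ m - 356 ^ n :=
    Int.dvd_pow_sub_pow_of_pow_mod_eq (k := 4) (l := 2) (by decide) (by decide)
      (by rw [hm, hn]; decide)
  refine ⟨?_, h3, h7, h5, h17⟩
  have hcover : 2 ∣ n ∨ m ≡ n [MOD 2] ∨ 4 ∣ m ∨ (m % 4 = 2 ∧ n % 2 = 1) := by
    unfold Nat.ModEq; omega
  rcases hcover with hn | hmn | hm | ⟨hm, hn⟩
  · exact Int.one_lt_gcd_of_dvd_s19 (d := 3) (by norm_num) (by norm_num) (h3 hn) (by norm_num)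
  · exact Int.one_lt_gcd_of_dvd_s19 (d := 7) (by norm_num) (by norm_num) (h7 hmn) (by norm_num)
  · exact Int.one_lt_gcd_of_dvd_s19 (d := 5) (by norm_num) (by norm_num) (h5 hm) (by norm_num)
  · exact Int.one_lt_gcd_of_dvd_s19 (d := 17) (by norm_num) (by norm_num) (h17 hm hn) (by norm_num)
end
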